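/- Let (C, J, P) be a geometric context. If f : F → G and g : G → H are morphisms in Sh(C, J) such that the composite g ∘ f and g are both open immersions, then f is an open immersion. -/

import Mathlib

open CategoryTheory CategoryTheory.Limits

universe u

namespace GeomCtx

variable {C : Type u} [SmallCategory C]

/-- An arrow `f` of a category is *cartesian* if pullbacks of arbitrary morphisms
along `f` exist. -/
def CartesianArrow {X Y : C} (f : X ⟶ Y) : Prop :=
  ∀ ⦃Z : C⦄ (g : Z ⟶ Y), HasPullback f g

/-- A family of arrows `(ρ i : Ui i ⟶ X)` is a `J`-covering if the sieve it
generates is a `J`-covering sieve. -/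
def IsJCover (J : GrothendieckTopology C) {X : C} {I : Type u} (Ui : I → C)
    (ρ : ∀ i, Ui i ⟶ X) : Prop :=
  Sieve.generate (Presieve.ofArrows Ui ρ) ∈ J X

/-- A Grothendieck pretopology (in the sense that does not presuppose the existence of
all pullbacks in `C`): a collection of covering families consisting of cartesian arrows,
stable under pullback, transitive, and containing the isomorphisms. -/
structure IsPretopology (Cov : ∀ U : C, Set (Presieve U)) : Prop where
  cartesian : ∀ ⦃U : C⦄, ∀ R ∈ Cov U, ∀ ⦃V : C⦄ (f : V ⟶ U), R f → CartesianArrow f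
  pullback_stable : ∀ ⦃U V : C⦄ (g : V ⟶ U), ∀ R ∈ Cov U,
    ∃ S ∈ Cov V, ∀ ⦃W : C⦄ (f : W ⟶ V), S f →
      ∃ (Z : C) (r : Z ⟶ U) (h : W ⟶ Z), R r ∧ IsPullback h f r g
  trans : ∀ ⦃U : C⦄ (R : Presieve U), R ∈ Cov U →
    ∀ (T : ∀ ⦃V : C⦄ ⦃f : V ⟶ U⦄, R f → Presieve V),
      (∀ ⦃V : C⦄ ⦃f : V ⟶ U⦄ (hf : R f), T hf ∈ Cov V) →
      R.bind T ∈ Cov U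
  has_isos : ∀ ⦃U V : C⦄ (f : V ⟶ U) [IsIso f], Presieve.singleton f ∈ Cov U

/-- A Grothendieck topology is generated by a pretopology if its covering sieves are
exactly the sieves containing a sieve generated by a covering family of the pretopology. -/
def GeneratedByPretopology (J : GrothendieckTopology C) : Prop :=
  ∃ Cov : ∀ U : C, Set (Presieve U), IsPretopology Cov ∧
    ∀ (U : C) (S : Sieve U), S ∈ J U ↔ ∃ R ∈ Cov U, Sieve.generate R ≤ S

/-- A *geometric context* `(C, J, P)`: a small category `C` with finite products, a
subcanonical Grothendieck topology `J` generated by a pretopology, and an admissible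
class `P` of arrows of `C` which is `J`-local and locally cartesian, and such that `J`
is `P`-generated. -/
structure IsGeometricContext (J : GrothendieckTopology C) (P : MorphismProperty C) : Prop where
  /-- (GC1) `C` admits finite products. -/
  hasFiniteProducts : HasFiniteProducts C
  /-- (GC2a) `J` is subcanonical: every representable presheaf is a `J`-sheaf. -/
  subcanonical : ∀ U : C, Presheaf.IsSheaf J (yoneda.obj U)
  /-- (GC2b) `J` is generated by a Grothendieck pretopology. -/
  pretopologyGenerated : GeneratedByPretopology J
  /-- (GC3a) `P` contains all identities. -/
  id_mem : ∀ U : C, P (𝟙 U)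
  /-- (GC3b) `P` is stable under base change. -/
  stableUnderBaseChange : ∀ ⦃U' V' U V : C⦄ (f' : U' ⟶ V') (g' : U' ⟶ U)
    (g : V' ⟶ V) (f : U ⟶ V), IsPullback f' g' g f → P f → P f'
  /-- (GC3c) `P` is stable under composition. -/
  stableUnderComposition : ∀ ⦃U V W : C⦄ (f : U ⟶ V) (g : V ⟶ W), P f → P g → P (f ≫ g)
  /-- (GC4) `P` is `J`-local. -/
  jLocal : ∀ ⦃U V : C⦄ (φ : U ⟶ V) ⦃I : Type u⦄ (Ui : I → C) (ρ : ∀ i, Ui i ⟶ U),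
    IsJCover J Ui ρ → (∀ i, P (ρ i)) → (∀ i, P (ρ i ≫ φ)) → P φ
  /-- (GC5) `J` is `P`-generated: every `J`-covering admits a `P`-refinement. -/
  pGenerated : ∀ ⦃U : C⦄ ⦃A : Type u⦄ (Ua : A → C) (ρ : ∀ a, Ua a ⟶ U),
    IsJCover J Ua ρ → ∃ (I : Type u) (Vi : I → C) (φ : ∀ i, Vi i ⟶ U),
      (∀ i, P (φ i)) ∧ ∀ a, ∃ (i : I) (g : Ua a ⟶ Vi i), g ≫ φ i = ρ a
  /-- (GC6) `P` is locally cartesian. -/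
  locallyCartesian : ∀ ⦃U V : C⦄ (φ : U ⟶ V), P φ →
    ∃ (I : Type u) (Ui : I → C) (ρ : ∀ i, Ui i ⟶ U),
      IsJCover J Ui ρ ∧ (∀ i, P (ρ i)) ∧ ∀ i, CartesianArrow (ρ i ≫ φ)

variable (J : GrothendieckTopology C)

/-- `Subcanonicity` of `J`, phrased concretely. -/
abbrev Subcanonical : Prop := ∀ U : C, Presheaf.IsSheaf J (yoneda.obj U)

/-- The sheaf represented by an object `U` of `C` (for a subcanonical topology). -/
def yo (hs : Subcanonical J) (U : C) : Sheaf J (Type u) :=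
  ⟨yoneda.obj U, hs U⟩

/-- The morphism of representable sheaves induced by a morphism of `C`. -/
def yoMap (hs : Subcanonical J) {U V : C} (f : U ⟶ V) : yo J hs U ⟶ yo J hs V :=
  ⟨yoneda.map f⟩

/-- Two morphisms `f : A ⟶ X` and `g : B ⟶ X` of sheaves have the same image, as a
subobject of `X`: there is a common monomorphism into `X` through which both factor
epimorphically. -/
def SameImage {A B X : Sheaf J (Type u)} (f : A ⟶ X) (g : B ⟶ X) : Prop :=
  ∃ (W : Sheaf J (Type u)) (i : W ⟶ X) (p : A ⟶ W) (q : B ⟶ W),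
    Mono i ∧ Epi p ∧ Epi q ∧ p ≫ i = f ∧ q ≫ i = g

instance hasColimitsOfShapeDiscreteSheafType {I : Type u} :
    HasColimitsOfShape (Discrete I) (Sheaf J (Type u)) :=
  CategoryTheory.Sheaf.instHasColimitsOfShape

variable (P : MorphismProperty C)

/-- A morphism of sheaves `f : F ⟶ H` is an *open immersion* if for every `U : C` and
every morphism `g : h_U ⟶ H`, the projection `F ×_H h_U ⟶ h_U` is a monomorphism and
there is a family of `P`-morphisms `(Ui i ⟶ U)` such that the image of the induced
morphism `∐ h_{Ui i} ⟶ h_U` coincides, as a subobject of `h_U`, with the image of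
`F ×_H h_U ⟶ h_U`. -/
def IsOpenImmersion (hs : Subcanonical J) {F H : Sheaf J (Type u)} (f : F ⟶ H) : Prop :=
  ∀ (U : C) (g : yo J hs U ⟶ H),
    Mono (pullback.snd f g) ∧
    ∃ (I : Type u) (Ui : I → C) (ρ : ∀ i, Ui i ⟶ U),
      (∀ i, P (ρ i)) ∧
      SameImage J (Limits.Sigma.desc fun i => yoMap J hs (ρ i)) (pullback.snd f g)

/-- An *open atlas* of a sheaf `X`: a family of open immersions from representable
sheaves which is jointly epimorphic. A sheaf admitting an open atlas is an
*elementary scheme*. -/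
def IsElementaryScheme (hs : Subcanonical J) (X : Sheaf J (Type u)) : Prop :=
  ∃ (I : Type u) (Ui : I → C) (p : ∀ i, yo J hs (Ui i) ⟶ X),
    (∀ i, IsOpenImmersion J P hs (p i)) ∧ Epi (Limits.Sigma.desc p)

/-- A morphism of sheaves `f : F ⟶ H` is an *`S`-morphism* if for every `U : C` and
every `g : h_U ⟶ H` there is an open atlas `∐ h_{Ui i} ⟶ F ×_H h_U` such that each
induced composite `Ui i ⟶ U` (viewed in `C` via the Yoneda embedding) lies in `S`. -/
def IsSMorphism (hs : Subcanonical J) (S : MorphismProperty C)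
    {F H : Sheaf J (Type u)} (f : F ⟶ H) : Prop :=
  ∀ (U : C) (g : yo J hs U ⟶ H),
    ∃ (I : Type u) (Ui : I → C) (p : ∀ i, yo J hs (Ui i) ⟶ pullback f g),
      (∀ i, IsOpenImmersion J P hs (p i)) ∧ Epi (Limits.Sigma.desc p) ∧
      ∀ i, ∃ ρ : Ui i ⟶ U, yoMap J hs ρ = p i ≫ pullback.snd f g ∧ S ρ

/-- A morphism of sheaves `f : F ⟶ H` is *schematic* if for every `U : C` and every
`g : h_U ⟶ H` the pullback `F ×_H h_U` is an elementary scheme. -/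
def IsSchematic (hs : Subcanonical J) {F H : Sheaf J (Type u)} (f : F ⟶ H) : Prop :=
  ∀ (U : C) (g : yo J hs U ⟶ H), IsElementaryScheme J P hs (pullback f g)

end GeomCtx

open GeomCtx in
/-- An open immersion of sheaves is a monomorphism. -/
theorem aux_mono_of_openImmersion {C : Type u} [SmallCategory C] (J : GrothendieckTopology C)
    (P : MorphismProperty C) (hs : Subcanonical J) {G H : Sheaf J (Type u)} (g : G ⟶ H)
    (hg : IsOpenImmersion J P hs g) : Mono g := by
  have hval : Mono g.hom := by
    have happ : ∀ X : Cᵒᵖ, Mono (g.hom.app X) := by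
      rintro ⟨V⟩
      rw [CategoryTheory.mono_iff_injective]
      intro x y hxy
      let xh : yo J hs V ⟶ G := ⟨yonedaEquiv.symm x⟩
      let yh : yo J hs V ⟶ G := ⟨yonedaEquiv.symm y⟩
      have hcomp : yh ≫ g = xh ≫ g := by
        apply Sheaf.hom_ext
        show yonedaEquiv.symm y ≫ g.hom = yonedaEquiv.symm x ≫ g.hom
        rw [yonedaEquiv_symm_naturality_right, yonedaEquiv_symm_naturality_right, hxy]
      have hm := (hg V (xh ≫ g)).1
      let u : yo J hs V ⟶ pullback g (xh ≫ g) :=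
        pullback.lift xh (𝟙 _) (by rw [Category.id_comp])
      let v : yo J hs V ⟶ pullback g (xh ≫ g) :=
        pullback.lift yh (𝟙 _) (by rw [Category.id_comp, hcomp])
      have huv : u = v := by
        rw [← cancel_mono (pullback.snd g (xh ≫ g))]
        simp only [u, v, pullback.lift_snd]
      have hxy' : xh = yh := by
        have h1 : u ≫ pullback.fst g (xh ≫ g) = xh := pullback.lift_fst _ _ _
        have h2 : v ≫ pullback.fst g (xh ≫ g) = yh := pullback.lift_fst _ _ _
        rw [← h1, ← h2, huv]
      exact yonedaEquiv.symm.injective (congrArg InducedCategory.Hom.hom hxy')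
    exact NatTrans.mono_of_mono_app g.hom
  exact Sheaf.Hom.mono_of_presheaf_mono J _ g

open GeomCtx in
/-- If `g ∘ f` and `g` are open immersions of sheaves, then so is `f`. -/
theorem statement4 {C : Type u} [SmallCategory C] (J : GrothendieckTopology C)
    (P : MorphismProperty C) (hGC : IsGeometricContext J P)
    {F G H : Sheaf J (Type u)} (f : F ⟶ G) (g : G ⟶ H)
    (hgf : IsOpenImmersion J P hGC.subcanonical (f ≫ g))
    (hg : IsOpenImmersion J P hGC.subcanonical g) :
    IsOpenImmersion J P hGC.subcanonical f := by
  have hgm : Mono g := aux_mono_of_openImmersion J P hGC.subcanonical g hg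
  intro U a
  have hm := (hgf U (a ≫ g)).1
  let t : pullback f a ⟶ pullback (f ≫ g) (a ≫ g) :=
    pullback.lift (pullback.fst f a) (pullback.snd f a)
      (by rw [← Category.assoc, pullback.condition, Category.assoc])
  let s : pullback (f ≫ g) (a ≫ g) ⟶ pullback f a :=
    pullback.lift (pullback.fst (f ≫ g) (a ≫ g)) (pullback.snd (f ≫ g) (a ≫ g))
      (by rw [← cancel_mono g, Category.assoc, Category.assoc, pullback.condition])
  have hts : t ≫ s = 𝟙 _ := by
    apply pullback.hom_ext <;> simp only [t, s, Category.assoc, pullback.lift_fst, pullback.lift_snd, Category.id_comp]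
  have hst : s ≫ t = 𝟙 _ := by
    apply pullback.hom_ext <;> simp only [t, s, Category.assoc, pullback.lift_fst, pullback.lift_snd, Category.id_comp]
  have hiso : IsIso t := ⟨s, hts, hst⟩
  have htsnd : t ≫ pullback.snd (f ≫ g) (a ≫ g) = pullback.snd f a := pullback.lift_snd _ _ _
  constructor
  · rw [← htsnd]
    exact mono_comp _ _
  · obtain ⟨I, Ui, ρ, hP, W, i, p, q, hi, hp, hq, hpi, hqi⟩ := (hgf U (a ≫ g)).2
    exact ⟨I, Ui, ρ, hP, W, i, p, t ≫ q, hi, hp, epi_comp _ _,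
      hpi, by rw [Category.assoc, hqi, htsnd]⟩
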